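/- Every symmetric matrix a ∈ SL(2,ℂ) (i.e. aᵀ = a and det a = 1) can be written as a = b·bᵀ for some b ∈ SL(2,ℂ). -/
import Mathlib


open Matrix

lemma transpose_fin_two' (x y z w : ℂ) : (!![x, y; z, w])ᵀ = !![x, z; y, w] := by
  ext i j
  fin_cases i <;> fin_cases j <;> simp

/-- Every symmetric matrix `a ∈ SL(2,ℂ)` can be written as `a = b * bᵀ`
for some `b ∈ SL(2,ℂ)`. -/
theorem symmetric_sl2_eq_b_mul_b_transpose
    (a : Matrix (Fin 2) (Fin 2) ℂ) (hsymm : aᵀ = a) (hdet : a.det = 1) :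
    ∃ b : Matrix (Fin 2) (Fin 2) ℂ, b.det = 1 ∧ a = b * bᵀ := by
  set p := a 0 0 with hp
  set q := a 0 1 with hq
  set s := a 1 1 with hs
  have hq' : a 1 0 = q := by
    conv_lhs => rw [← hsymm]
    simp [transpose_apply, hq]
  have hd : p * s - q * q = 1 := by
    rw [← hdet, Matrix.det_fin_two, hq']
  have ha : a = !![p, q; q, s] := by
    ext i j
    fin_cases i <;> fin_cases j <;> simp [hp, hq, hs, hq']
  by_cases htr : p + s + 2 = 0
  · -- degenerate case: trace = -2, q² = -(p+1)²
    have hs' : s = -2 - p := by linear_combination htr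
    have hqq : (q - Complex.I * (p + 1)) * (q + Complex.I * (p + 1)) = 0 := by
      linear_combination -hd + p * hs' + hs' - (p + 1) * (p + 1) * Complex.I_sq - htr
    rcases mul_eq_zero.1 hqq with h | h
    · -- q = I * (p+1)
      have hqv : q = Complex.I * (p + 1) := by linear_combination h
      refine ⟨!![(p+1)/2, Complex.I * (1 - (p+1)/2); Complex.I * (1 + (p+1)/2), (p+1)/2],
        ?_, ?_⟩
      · rw [Matrix.det_fin_two_of]
        linear_combination (((p+1)/2)^2 - 1) * Complex.I_sq
      · rw [ha, transpose_fin_two', Matrix.mul_fin_two]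
        refine Matrix.ext fun i j => ?_
        fin_cases i <;> fin_cases j <;> simp
        · linear_combination -(1 - (p+1)/2)^2 * Complex.I_sq
        · linear_combination hqv
        · linear_combination hqv
        · linear_combination hs' - (1 + (p+1)/2)^2 * Complex.I_sq
    · -- q = -I * (p+1)
      have hqv : q = -(Complex.I * (p + 1)) := by linear_combination h
      refine ⟨!![(p+1)/2, -(Complex.I * (1 - (p+1)/2)); -(Complex.I * (1 + (p+1)/2)), (p+1)/2],
        ?_, ?_⟩
      · rw [Matrix.det_fin_two_of]
        linear_combination (((p+1)/2)^2 - 1) * Complex.I_sq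
      · rw [ha, transpose_fin_two', Matrix.mul_fin_two]
        refine Matrix.ext fun i j => ?_
        fin_cases i <;> fin_cases j <;> simp
        · linear_combination -(1 - (p+1)/2)^2 * Complex.I_sq
        · linear_combination hqv
        · linear_combination hqv
        · linear_combination hs' - (1 + (p+1)/2)^2 * Complex.I_sq
  · -- generic case: take b = (a + 1)/z with z² = tr + 2
    obtain ⟨z, hz⟩ := IsAlgClosed.exists_pow_nat_eq (k := ℂ) (p + s + 2) (n := 2) (by norm_num)
    have hz0 : z ≠ 0 := by
      rintro rfl; apply htr; rw [← hz]; ring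
    refine ⟨!![(p+1)/z, q/z; q/z, (s+1)/z], ?_, ?_⟩
    · rw [Matrix.det_fin_two_of]
      field_simp
      linear_combination hd - hz
    · rw [ha, transpose_fin_two', Matrix.mul_fin_two]
      refine Matrix.ext fun i j => ?_
      fin_cases i <;> fin_cases j <;> simp <;> field_simp
      · linear_combination p * hz + hd
      · linear_combination q * hz
      · linear_combination q * hz
      · linear_combination s * hz + hd
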